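/- arXiv:2509.18486 — 10 statements merged into one kernel-verified Lean document; each statement's English description precedes it below -/
import Mathlib

section
/- If S ⊆ V is a minimal X-set (S is an X-set and no proper subset of S is an X-set), then S is a maximal X-irredundant set: every element of S has a private blocking set, and no proper superset of S is X-irredundant. -/
/-- A minimal X-set is a maximal X-irredundant set. -/
theorem stmt1 {V : Type*} (𝒳 ℬ : Set (Set V))
    (hsup : ∀ S S' : Set V, S ∈ 𝒳 → S ⊆ S' → S' ∈ 𝒳)
    (hV : (Set.univ : Set V) ∈ 𝒳)
    (hblock : ∀ S : Set V, S ∈ 𝒳 ↔ ∀ R ∈ ℬ, (S ∩ R).Nonempty)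
    (S : Set V) (hX : S ∈ 𝒳) (hmin : ∀ S' : Set V, S' ⊂ S → S' ∉ 𝒳) :
    (∀ u ∈ S, ∃ R ∈ ℬ, S ∩ R = {u}) ∧
      ∀ T : Set V, S ⊂ T → ¬ (∀ u ∈ T, ∃ R ∈ ℬ, T ∩ R = {u}) := by
  constructor
  · intro u hu
    have hne : S \ {u} ∉ 𝒳 := hmin _ ⟨Set.diff_subset, fun h => (h hu).2 rfl⟩
    rw [hblock] at hne
    push_neg at hne
    obtain ⟨R, hR, hempty⟩ := hne
    refine ⟨R, hR, ?_⟩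
    have hSR : (S ∩ R).Nonempty := (hblock S).mp hX R hR
    apply Set.eq_singleton_iff_nonempty_unique_mem.mpr
    refine ⟨hSR, fun x hx => ?_⟩
    by_contra hxu
    exact Set.eq_empty_iff_forall_notMem.mp hempty x ⟨⟨hx.1, hxu⟩, hx.2⟩
  · intro T hST hall
    obtain ⟨v, hvT, hvS⟩ := Set.exists_of_ssubset hST
    obtain ⟨R, hR, hTR⟩ := hall v hvT
    have hSR : (S ∩ R).Nonempty := (hblock S).mp hX R hR
    obtain ⟨x, hxS, hxR⟩ := hSR
    have : x ∈ T ∩ R := ⟨hST.1 hxS, hxR⟩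
    rw [hTR] at this
    exact hvS (this ▸ hxS)
end

section
/- Let φ be an X-compliant closure operator on subsets of V, and let B_Φ = {V \ φ(A) : A ∉ 𝒳}. Then every minimal blocking set belongs to B_Φ; consequently B_Φ is an X-irredundant blocking family (S ∈ 𝒳 ⟺ S ∩ R ≠ ∅ for all R ∈ B_Φ). -/
/-- For an X-compliant closure operator `φ`, every minimal blocking set belongs to
`B_Φ = {V \ φ(A) : A ∉ 𝒳}`, and consequently `B_Φ` is an X-irredundant blocking family. -/
theorem stmt6 {V : Type*} [Fintype V] (𝒳 : Set (Set V))
    (hsup : ∀ S S' : Set V, S ∈ 𝒳 → S ⊆ S' → S' ∈ 𝒳)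
    (φ : Set V → Set V)
    (hext : ∀ A : Set V, A ⊆ φ A)
    (hmono : ∀ A B : Set V, A ⊆ B → φ A ⊆ φ B)
    (hidem : ∀ A : Set V, φ (φ A) = φ A)
    (hcomp : ∀ S : Set V, S ∈ 𝒳 ↔ φ S = Set.univ) :
    (∀ R : Set V, (Rᶜ ∉ 𝒳 ∧ ∀ R' : Set V, R' ⊂ R → R'ᶜ ∈ 𝒳) →
        ∃ A : Set V, A ∉ 𝒳 ∧ R = (φ A)ᶜ) ∧
      (∀ S : Set V, S ∈ 𝒳 ↔
        ∀ R : Set V, (∃ A : Set V, A ∉ 𝒳 ∧ R = (φ A)ᶜ) → (S ∩ R).Nonempty) := by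
  constructor
  · rintro R ⟨hR, hmin⟩
    refine ⟨Rᶜ, hR, ?_⟩
    have hsub : (φ Rᶜ)ᶜ ⊆ R := by
      have := hext Rᶜ
      intro x hx
      by_contra hxR
      exact hx (this hxR)
    by_contra hne
    have hss : (φ Rᶜ)ᶜ ⊂ R := HasSubset.Subset.ssubset_of_ne hsub (fun h => hne h.symm)
    have h1 : ((φ Rᶜ)ᶜ)ᶜ ∈ 𝒳 := hmin _ hss
    rw [compl_compl] at h1
    have h2 : φ (φ Rᶜ) = Set.univ := (hcomp _).mp h1
    rw [hidem] at h2
    exact hR ((hcomp _).mpr h2)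
  · intro S
    constructor
    · rintro hS R ⟨A, hA, rfl⟩
      by_contra hempty
      have hsub : S ⊆ φ A := by
        intro x hx
        by_contra hx'
        exact hempty ⟨x, hx, hx'⟩
      have : φ S ⊆ φ A := by
        have := hmono S (φ A) hsub
        rwa [hidem] at this
      have hSu : φ S = Set.univ := (hcomp S).mp hS
      rw [hSu] at this
      exact hA ((hcomp A).mpr (Set.univ_subset_iff.mp this))
    · intro h
      by_contra hS
      obtain ⟨x, hx1, hx2⟩ := h (φ S)ᶜ ⟨S, hS, rfl⟩
      exact hx2 (hext S hx1)
end

section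
/- If G is a graph with no isolated vertices and S ⊆ V(G) is a domination-irredundant set, then S is a VC-irredundant set. Consequently DIR(G) ≤ VCIR(G). -/
/-!
Let `x ∈ S` with private closed neighbourhood `N[w] ∩ S = {x}`. If `w = x`, no neighbour of `x`
lies in `S`, so any edge at `x` (there is one, as `x` is not isolated) is private. Otherwise `w` is
a neighbour of `x` outside `S`, and `xw` is private. Hence every DIr-set is VC-irredundant. Since
`V` is finite, every VC-irredundant set extends to a maximal one, so the largest maximal DIr-set is
bounded by the largest maximal VC-irredundant set.
-/

namespace SimpleGraph

variable {V : Type*} (G : SimpleGraph V)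

def IsDomIrredundant (S : Set V) : Prop :=
  ∀ x ∈ S, ∃ w : V, insert w (G.neighborSet w) ∩ S = {x}

def IsVCIrredundant (S : Set V) : Prop :=
  ∀ x ∈ S, ∃ u, G.Adj x u ∧ u ∉ S

variable {G}

theorem IsDomIrredundant.isVCIrredundant (hni : ∀ v : V, ∃ w, G.Adj v w) {S : Set V}
    (hS : G.IsDomIrredundant S) : G.IsVCIrredundant S := by
  intro x hx
  obtain ⟨w, hw⟩ := hS x hx
  have eq_of_mem : ∀ y, y ∈ insert w (G.neighborSet w) → y ∈ S → y = x := fun y hyN hyS => by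
    have hy : y ∈ insert w (G.neighborSet w) ∩ S := ⟨hyN, hyS⟩
    rwa [hw] at hy
  have hxN : x ∈ insert w (G.neighborSet w) := (hw.symm ▸ rfl : x ∈ _ ∩ S).1
  rcases hxN with rfl | hwx
  · obtain ⟨u, hxu⟩ := hni x
    exact ⟨u, hxu, fun huS => hxu.ne (eq_of_mem u (Or.inr hxu) huS).symm⟩
  · exact ⟨w, hwx.symm, fun hwS => hwx.ne (eq_of_mem w (Set.mem_insert w _) hwS)⟩

end SimpleGraph

theorem Set.sSup_ncard_maximal_le {V : Type*} [Finite V] {P Q : Set V → Prop}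
    (hPQ : ∀ S, P S → Q S) :
    sSup {n | ∃ S : Set V, (P S ∧ ∀ T : Set V, S ⊂ T → ¬ P T) ∧ S.ncard = n} ≤
      sSup {n | ∃ S : Set V, (Q S ∧ ∀ T : Set V, S ⊂ T → ¬ Q T) ∧ S.ncard = n} := by
  have hbdd : BddAbove {n | ∃ S : Set V, (Q S ∧ ∀ T : Set V, S ⊂ T → ¬ Q T) ∧ S.ncard = n} :=
    ⟨Nat.card V, by rintro _ ⟨S, -, rfl⟩; exact S.ncard_le_card⟩
  refine csSup_le' ?_
  rintro _ ⟨S, ⟨hS, -⟩, rfl⟩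
  obtain ⟨M, hSM, hM⟩ := _root_.Finite.exists_le_maximal (hPQ S hS)
  calc S.ncard ≤ M.ncard := Set.ncard_le_ncard hSM
    _ ≤ _ := le_csSup hbdd ⟨M, ⟨hM.prop, fun T hMT hT => hM.not_gt hT hMT⟩, rfl⟩

/-- Every domination-irredundant set is VC-irredundant; hence `DIR(G) ≤ VCIR(G)`. -/
theorem stmt11 {V : Type*} [Fintype V] (G : SimpleGraph V)
    (hni : ∀ v : V, ∃ w, G.Adj v w) :
    let DIrr : Set V → Prop := fun S =>
      ∀ x ∈ S, ∃ w : V, (insert w (G.neighborSet w)) ∩ S = {x}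
    let VIrr : Set V → Prop := fun S => ∀ x ∈ S, ∃ u, G.Adj x u ∧ u ∉ S
    (∀ S : Set V, DIrr S → VIrr S) ∧
      sSup {n | ∃ S : Set V, (DIrr S ∧ ∀ T : Set V, S ⊂ T → ¬ DIrr T) ∧ S.ncard = n} ≤
        sSup {n | ∃ S : Set V, (VIrr S ∧ ∀ T : Set V, S ⊂ T → ¬ VIrr T) ∧ S.ncard = n} := by
  have hDV : ∀ S : Set V, G.IsDomIrredundant S → G.IsVCIrredundant S :=
    fun _ => SimpleGraph.IsDomIrredundant.isVCIrredundant hni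
  exact ⟨hDV, Set.sSup_ncard_maximal_le hDV⟩
end

section
/- For a graph G of order n ≥ 3 with no isolated vertices: if D is a connected 2-dominating set of G (G[D] connected and every vertex outside D has at least two neighbors in D), then V(G) \ D is a PSD-forcing irredundant set; hence ZpIR(G) ≥ n − γ₂ᶜ(G) where γ₂ᶜ(G) is the minimum size of a connected 2-dominating set. -/
/-- A standard fort: a nonempty set `F` such that no vertex outside `F` has exactly one
neighbor in `F`. -/
def stdFort {V : Type*} (G : SimpleGraph V) (F : Set V) : Prop :=
  F.Nonempty ∧ ∀ v ∉ F, (G.neighborSet v ∩ F).ncard ≠ 1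

/-- The vertex set of the connected component of `u` in the subgraph induced by `F`. -/
def compOf {V : Type*} (G : SimpleGraph V) (F : Set V) (u : F) : Set V :=
  {w | ∃ hw : w ∈ F, (G.induce F).Reachable ⟨w, hw⟩ u}

/-- A PSD fort: a nonempty set each of whose induced connected components is a standard
fort of `G`. -/
def psdFort {V : Type*} (G : SimpleGraph V) (F : Set V) : Prop :=
  F.Nonempty ∧ ∀ u : F, stdFort G (compOf G F u)

/-- `S` is PSD-irredundant if every element of `S` has a private PSD fort. -/
def psdIrr {V : Type*} (G : SimpleGraph V) (S : Set V) : Prop :=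
  ∀ u ∈ S, ∃ F : Set V, psdFort G F ∧ S ∩ F = {u}


lemma aux_conn {V : Type*} (G : SimpleGraph V) (D : Set V) (u : V)
    (hconn : (G.induce D).Connected) (d : V) (hd : d ∈ D) (hud : G.Adj u d) :
    (G.induce (D ∪ {u})).Connected := by
  have hι : ∀ a b : {x // x ∈ D}, (G.induce D).Reachable a b →
      (G.induce (D ∪ {u})).Reachable ⟨a.1, Or.inl a.2⟩ ⟨b.1, Or.inl b.2⟩ := by
    intro a b h
    exact h.map (⟨fun x => ⟨x.1, Or.inl x.2⟩, fun h => h⟩ : G.induce D →g G.induce (D ∪ {u}))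
  have hu : (G.induce (D ∪ {u})).Reachable ⟨u, Or.inr rfl⟩ ⟨d, Or.inl hd⟩ :=
    SimpleGraph.Adj.reachable hud
  haveI : Nonempty ↑(D ∪ {u}) := ⟨⟨u, Or.inr rfl⟩⟩
  refine ⟨fun a b => ?_⟩
  obtain ⟨x, hx⟩ := a
  obtain ⟨y, hy⟩ := b
  rcases hx with hx | hx
  · rcases hy with hy | hy
    · exact hι ⟨x, hx⟩ ⟨y, hy⟩ (hconn.preconnected _ _)
    · cases hy
      exact (hι ⟨x, hx⟩ ⟨d, hd⟩ (hconn.preconnected _ _)).trans hu.symm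
  · cases hx
    rcases hy with hy | hy
    · exact hu.trans (hι ⟨d, hd⟩ ⟨y, hy⟩ (hconn.preconnected _ _))
    · cases hy; exact SimpleGraph.Reachable.refl _

lemma aux_psdIrr {V : Type*} [Fintype V] (G : SimpleGraph V) (D : Set V)
    (hD : (G.induce D).Connected ∧ ∀ v ∉ D, 2 ≤ (G.neighborSet v ∩ D).ncard) :
    psdIrr G Dᶜ := by
  intro u hu
  obtain ⟨hconn, hdom⟩ := hD
  have hu' : u ∉ D := hu
  -- u has a neighbor in D
  have h2 := hdom u hu'
  have hne : (G.neighborSet u ∩ D).Nonempty := by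
    rw [Set.nonempty_iff_ne_empty]
    intro h
    rw [h] at h2
    simp at h2
  obtain ⟨d, hdadj, hdD⟩ := hne
  set F := D ∪ {u} with hF
  have hconnF : (G.induce F).Connected := aux_conn G D u hconn d hdD hdadj
  have hcomp : ∀ w : F, compOf G F w = F := by
    intro w
    apply Set.Subset.antisymm
    · rintro x ⟨hx, -⟩; exact hx
    · intro x hx
      exact ⟨hx, hconnF.preconnected ⟨x, hx⟩ w⟩
  have hstd : stdFort G F := by
    refine ⟨⟨u, Or.inr rfl⟩, fun v hv => ?_⟩
    have hvD : v ∉ D := fun h => hv (Or.inl h)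
    have := hdom v hvD
    have hle : (G.neighborSet v ∩ D).ncard ≤ (G.neighborSet v ∩ F).ncard :=
      Set.ncard_le_ncard (Set.inter_subset_inter_right _ Set.subset_union_left)
        (Set.toFinite _)
    omega
  refine ⟨F, ⟨⟨u, Or.inr rfl⟩, fun w => ?_⟩, ?_⟩
  · rw [hcomp w]; exact hstd
  · ext x
    simp only [Set.mem_inter_iff, Set.mem_compl_iff, Set.mem_singleton_iff, hF,
      Set.mem_union]
    constructor
    · rintro ⟨hxD, hx | hx⟩
      · exact absurd hx hxD
      · exact hx
    · rintro rfl
      exact ⟨hu', Or.inr rfl⟩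

/-- If `D` is a connected 2-dominating set then `V(G) \ D` is PSD-irredundant;
hence `ZpIR(G) ≥ n − γ₂ᶜ(G)`. -/
theorem stmt12 {V : Type*} [Fintype V] (G : SimpleGraph V)
    (h3 : 3 ≤ Fintype.card V) (hni : ∀ v : V, ∃ w, G.Adj v w)
    (hex : ∃ D : Set V, (G.induce D).Connected ∧
      ∀ v ∉ D, 2 ≤ (G.neighborSet v ∩ D).ncard) :
    (∀ D : Set V,
        ((G.induce D).Connected ∧ ∀ v ∉ D, 2 ≤ (G.neighborSet v ∩ D).ncard) →
        psdIrr G Dᶜ) ∧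
      Fintype.card V -
          sInf {n | ∃ D : Set V, ((G.induce D).Connected ∧
            ∀ v ∉ D, 2 ≤ (G.neighborSet v ∩ D).ncard) ∧ D.ncard = n} ≤
        sSup {n | ∃ S : Set V, psdIrr G S ∧ S.ncard = n} := by
  refine ⟨fun D hD => aux_psdIrr G D hD, ?_⟩
  have hTne : {n | ∃ D : Set V, ((G.induce D).Connected ∧
      ∀ v ∉ D, 2 ≤ (G.neighborSet v ∩ D).ncard) ∧ D.ncard = n}.Nonempty := by
    obtain ⟨D, hD⟩ := hex
    exact ⟨D.ncard, D, hD, rfl⟩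
  obtain ⟨D0, hD0, hcard⟩ := Nat.sInf_mem hTne
  have hcc : D0ᶜ.ncard = Fintype.card V - sInf {n | ∃ D : Set V, ((G.induce D).Connected ∧
      ∀ v ∉ D, 2 ≤ (G.neighborSet v ∩ D).ncard) ∧ D.ncard = n} := by
    have h1 := Set.ncard_add_ncard_compl D0
    rw [Nat.card_eq_fintype_card] at h1
    omega
  have hbdd : BddAbove {n | ∃ S : Set V, psdIrr G S ∧ S.ncard = n} := by
    refine ⟨Fintype.card V, fun n hn => ?_⟩
    obtain ⟨S, -, rfl⟩ := hn
    calc S.ncard ≤ (Set.univ : Set V).ncard :=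
          Set.ncard_le_ncard (Set.subset_univ S) (Set.toFinite _)
      _ = Fintype.card V := by rw [Set.ncard_univ, Nat.card_eq_fintype_card]
  rw [← hcc]
  exact le_csSup hbdd ⟨D0ᶜ, aux_psdIrr G D0 hD0, rfl⟩
end

section
/- If G is a graph with minimum degree δ(G) ≥ 2, then for any vertex v that is not a cut-vertex of a connected graph G, the set V(G) \ {v} is a PSD fort of G; consequently, zpir(G) ≥ 2, i.e., no singleton is a maximal PSD-irredundant set. -/
/-!
Call a nonempty set `C` of vertices avoiding `v` *pendant* if all edges leaving `C` end in a
single vertex `x ∉ C`; since `δ(G) ≥ 2`, `V(G) \ {v}` is pendant (it hangs from `v`). Take an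
inclusion-minimal pendant set `C`. It induces a connected subgraph, and `x` cannot have exactly
one neighbour `y` in `C`, for otherwise `C \ {y}` would be a smaller pendant set hanging from `y`;
hence `C` is a fort. Moreover no `w ∈ C` is a cut-vertex: a component of `G - w` missing `x` would
meet `C` in a smaller pendant set hanging from `w`. So for `S = {v}` any `w ∈ C` extends `S`, with
private forts `C` for `w` and `V(G) \ {w}` for `v`; and `S = ∅` extends to `{v}` with fort `V(G)`.
-/

namespace SimpleGraph

variable {V : Type*} {G : SimpleGraph V}

theorem Reachable.mem_of_adj_closed {D : Set V} (hD : ∀ a ∈ D, ∀ b, G.Adj a b → b ∈ D)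
    {a b : V} (h : G.Reachable a b) (ha : a ∈ D) : b ∈ D := by
  obtain ⟨p⟩ := h
  induction p with
  | nil => exact ha
  | cons hab _ ih => exact ih (hD _ ha _ hab)

end SimpleGraph

open SimpleGraph

section

variable {V : Type*} {G : SimpleGraph V}

section compOf

variable {F : Set V}

theorem compOf_subset (u : F) : compOf G F u ⊆ F := fun _ ⟨hw, _⟩ => hw

theorem mem_compOf_self (u : F) : (u : V) ∈ compOf G F u := ⟨u.2, .refl _⟩

theorem mem_compOf_of_adj {u : F} {a b : V} (ha : a ∈ compOf G F u) (hb : b ∈ F)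
    (hab : G.Adj a b) : b ∈ compOf G F u := by
  obtain ⟨ha', hr⟩ := ha
  have hadj : (G.induce F).Adj ⟨b, hb⟩ ⟨a, ha'⟩ := hab.symm
  exact ⟨hb, hadj.reachable.trans hr⟩

theorem compOf_eq_of_preconnected (h : (G.induce F).Preconnected) (u : F) :
    compOf G F u = F :=
  (compOf_subset u).antisymm fun _ hw => ⟨hw, h _ _⟩

theorem psdFort_of_preconnected (hF : stdFort G F) (h : (G.induce F).Preconnected) :
    psdFort G F :=
  ⟨hF.1, fun u => by rwa [compOf_eq_of_preconnected h u]⟩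

end compOf

theorem psdFort_univ (hconn : G.Connected) : psdFort G Set.univ :=
  psdFort_of_preconnected
    ⟨hconn.nonempty.elim fun v => ⟨v, trivial⟩, fun _ hv => (hv trivial).elim⟩
    ((Iso.preconnected_iff (induceUnivIso G)).2 hconn.preconnected)

theorem psdFort_compl_singleton {v : V} (hv : 2 ≤ (G.neighborSet v).ncard)
    (h : (G.induce {v}ᶜ).Connected) : psdFort G {v}ᶜ := by
  refine psdFort_of_preconnected
    ⟨h.nonempty.elim fun u => ⟨u, u.2⟩, fun y hy => ?_⟩ h.preconnected
  obtain rfl : y = v := by simpa using hy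
  have hN : G.neighborSet y ∩ {y}ᶜ = G.neighborSet y :=
    Set.inter_eq_left.2 fun _ hz => (G.ne_of_adj hz).symm
  rw [hN]
  omega

def HangsFrom (G : SimpleGraph V) (C : Set V) (x : V) : Prop :=
  x ∉ C ∧ ∀ c ∈ C, ∀ y ∉ C, G.Adj c y → y = x

def IsPendant (G : SimpleGraph V) (v : V) (C : Set V) : Prop :=
  C.Nonempty ∧ v ∉ C ∧ ∃ x, HangsFrom G C x

namespace HangsFrom

variable {C : Set V} {x : V}

theorem diff_singleton (hx : HangsFrom G C x) {y : V} (hy : G.neighborSet x ∩ C = {y}) :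
    HangsFrom G (C \ {y}) y := by
  refine ⟨fun h => h.2 rfl, fun c hc d hd hcd => ?_⟩
  by_contra hdy
  have hdC : d ∉ C := fun hdC => hd ⟨hdC, hdy⟩
  obtain rfl := hx.2 c hc.1 d hdC hcd
  have hc' : c ∈ G.neighborSet d ∩ C := ⟨hcd.symm, hc.1⟩
  rw [hy] at hc'
  exact hc.2 hc'

theorem inter_compOf (hx : HangsFrom G C x) {w : V} (u : ({w}ᶜ : Set V))
    (hxD : x ∉ compOf G {w}ᶜ u) : HangsFrom G (compOf G {w}ᶜ u ∩ C) w := by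
  refine ⟨fun h => compOf_subset u h.1 rfl, fun c hc y hy hcy => ?_⟩
  by_contra hyw
  have hyD : y ∈ compOf G {w}ᶜ u := mem_compOf_of_adj hc.1 hyw hcy
  exact hxD (hx.2 c hc.2 y (fun hyC => hy ⟨hyD, hyC⟩) hcy ▸ hyD)

/-- A component of `G - w` (for `w ∈ C`) missing `x` cannot avoid `C`, since then it would be
closed under adjacency in the connected graph `G`. -/
theorem compOf_inter_nonempty (hconn : G.Connected) (hx : HangsFrom G C x) {w : V}
    (hw : w ∈ C) (u : ({w}ᶜ : Set V)) (hxD : x ∉ compOf G {w}ᶜ u) :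
    (compOf G {w}ᶜ u ∩ C).Nonempty := by
  by_contra hempty
  have hclosed : ∀ a ∈ compOf G {w}ᶜ u, ∀ b, G.Adj a b → b ∈ compOf G {w}ᶜ u := by
    intro a ha b hab
    by_cases hbw : b = w
    · subst hbw
      have haC : a ∉ C := fun haC => hempty ⟨a, ha, haC⟩
      exact (hxD (hx.2 b hw a haC hab.symm ▸ ha)).elim
    · exact mem_compOf_of_adj ha hbw hab
  exact compOf_subset u ((hconn.preconnected u w).mem_of_adj_closed hclosed (mem_compOf_self u)) rfl

theorem compOf (hx : HangsFrom G C x) (u : C) : HangsFrom G (compOf G C u) x :=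
  ⟨fun h => hx.1 (compOf_subset u h), fun c hc y hy hcy =>
    hx.2 c (compOf_subset u hc) y (fun hyC => hy (mem_compOf_of_adj hc hyC hcy)) hcy⟩

end HangsFrom

section minimalPendant

variable {v : V} {C : Set V}

theorem exists_minimal_isPendant [Finite V] (hv : 2 ≤ (G.neighborSet v).ncard) :
    ∃ C, Minimal (IsPendant G v) C := by
  refine exists_minimal_of_wellFoundedLT _ ⟨{v}ᶜ, ?_, fun h => h rfl, v, fun h => h rfl, ?_⟩
  · obtain ⟨u, hu, -⟩ := Set.exists_ne_of_one_lt_ncard hv v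
    exact ⟨u, (G.ne_of_adj hu).symm⟩
  · intro c _ y hy _
    simpa using hy

theorem preconnected_of_minimal_isPendant (hC : Minimal (IsPendant G v) C) :
    (G.induce C).Preconnected := by
  obtain ⟨-, hv, x, hx⟩ := hC.prop
  intro a b
  have hpend : IsPendant G v (compOf G C b) :=
    ⟨⟨b, mem_compOf_self b⟩, fun h => hv (compOf_subset b h), x, hx.compOf b⟩
  have hsub : C ⊆ compOf G C b := hC.le_of_le hpend (compOf_subset b)
  exact (hsub a.2).2

theorem ncard_neighborSet_inter_ne_one_of_minimal_isPendant
    (hδ : ∀ y : V, 2 ≤ (G.neighborSet y).ncard) (hC : Minimal (IsPendant G v) C) {x : V}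
    (hx : HangsFrom G C x) : (G.neighborSet x ∩ C).ncard ≠ 1 := by
  intro h1
  obtain ⟨y, hy⟩ := Set.ncard_eq_one.1 h1
  have hyC : y ∈ C := (hy.symm ▸ rfl : y ∈ G.neighborSet x ∩ C).2
  obtain ⟨z, hyz, hzx⟩ := Set.exists_ne_of_one_lt_ncard (hδ y) x
  have hzC : z ∈ C := by
    by_contra hzC
    exact hzx (hx.2 y hyC z hzC hyz)
  have hpend : IsPendant G v (C \ {y}) :=
    ⟨⟨z, hzC, (G.ne_of_adj hyz).symm⟩, fun h => hC.prop.2.1 h.1, y, hx.diff_singleton hy⟩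
  exact (hC.le_of_le hpend Set.sdiff_subset hyC).2 rfl

theorem psdFort_of_minimal_isPendant (hδ : ∀ y : V, 2 ≤ (G.neighborSet y).ncard)
    (hC : Minimal (IsPendant G v) C) : psdFort G C := by
  obtain ⟨hne, -, x, hx⟩ := hC.prop
  refine psdFort_of_preconnected ⟨hne, fun y hy => ?_⟩ (preconnected_of_minimal_isPendant hC)
  by_cases hyx : y = x
  · exact hyx ▸ ncard_neighborSet_inter_ne_one_of_minimal_isPendant hδ hC hx
  · have hN : G.neighborSet y ∩ C = ∅ :=
      Set.eq_empty_of_forall_notMem fun c hc => hyx (hx.2 c hc.2 y hy hc.1.symm)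
    simp [hN]

theorem connected_induce_compl_singleton_of_minimal_isPendant (hconn : G.Connected)
    (hC : Minimal (IsPendant G v) C) {w : V} (hw : w ∈ C) : (G.induce {w}ᶜ).Connected := by
  obtain ⟨-, hv, x, hx⟩ := hC.prop
  have hxw : x ≠ w := fun h => hx.1 (h ▸ hw)
  have hxD : ∀ u : ({w}ᶜ : Set V), x ∈ compOf G {w}ᶜ u := by
    intro u
    by_contra hxD
    have hpend : IsPendant G v (compOf G {w}ᶜ u ∩ C) :=
      ⟨hx.compOf_inter_nonempty hconn hw u hxD, fun h => hv h.2, w, hx.inter_compOf u hxD⟩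
    exact compOf_subset u (hC.le_of_le hpend Set.inter_subset_right hw).1 rfl
  rw [connected_iff_exists_forall_reachable]
  exact ⟨⟨x, hxw⟩, fun u => (hxD u).2⟩

end minimalPendant

theorem psdIrr_singleton (hconn : G.Connected) (v : V) : psdIrr G {v} := by
  rintro u rfl
  exact ⟨Set.univ, psdFort_univ hconn, Set.inter_univ _⟩

theorem exists_psdIrr_pair [Finite V] (hconn : G.Connected)
    (hδ : ∀ y : V, 2 ≤ (G.neighborSet y).ncard) (v : V) : ∃ w ≠ v, psdIrr G {w, v} := by
  obtain ⟨C, hC⟩ := exists_minimal_isPendant (hδ v)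
  obtain ⟨⟨w, hw⟩, hvC, -⟩ := hC.prop
  have hwv : w ≠ v := fun h => hvC (h ▸ hw)
  refine ⟨w, hwv, ?_⟩
  rintro u (rfl | rfl)
  · exact ⟨C, psdFort_of_minimal_isPendant hδ hC, by
      rw [Set.insert_inter_of_mem hw, Set.singleton_inter_eq_empty.2 hvC, insert_empty_eq]⟩
  · exact ⟨{w}ᶜ, psdFort_compl_singleton (hδ w)
      (connected_induce_compl_singleton_of_minimal_isPendant hconn hC hw), by
      rw [Set.insert_inter_of_notMem (by simp),
        Set.inter_eq_left.2 (Set.singleton_subset_iff.2 hwv.symm)]⟩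

theorem exists_maximal_psdIrr [Finite V] (G : SimpleGraph V) :
    ∃ S : Set V, psdIrr G S ∧ ∀ T : Set V, S ⊂ T → ¬ psdIrr G T := by
  obtain ⟨S, hS⟩ := exists_maximal_of_wellFoundedGT (psdIrr G) ⟨∅, fun _ h => h.elim⟩
  exact ⟨S, hS.prop, fun T hST hT => hST.2 (hS.le_of_ge hT hST.1)⟩

theorem two_le_ncard_of_maximal_psdIrr [Finite V] (hconn : G.Connected)
    (hδ : ∀ y : V, 2 ≤ (G.neighborSet y).ncard) {S : Set V}
    (hS : psdIrr G S ∧ ∀ T : Set V, S ⊂ T → ¬ psdIrr G T) : 2 ≤ S.ncard := by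
  by_contra! hlt
  rcases (Set.ncard_le_one_iff_subsingleton.1 (Nat.le_of_lt_succ hlt)).eq_empty_or_singleton
    with rfl | ⟨v, rfl⟩
  · obtain ⟨v⟩ := hconn.nonempty
    exact hS.2 {v} (Set.empty_ssubset.2 ⟨v, rfl⟩) (psdIrr_singleton hconn v)
  · obtain ⟨w, hwv, hw⟩ := exists_psdIrr_pair hconn hδ v
    exact hS.2 {w, v} (Set.ssubset_insert (by simpa using hwv)) hw

end

/-- For a connected graph with `δ(G) ≥ 2`: for every non-cut-vertex `v`, `V(G) \ {v}`
is a PSD fort; consequently `zpir(G) ≥ 2`. -/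
theorem stmt13 {V : Type*} [Fintype V] (G : SimpleGraph V) (hconn : G.Connected)
    (hδ : ∀ v : V, 2 ≤ (G.neighborSet v).ncard) :
    (∀ v : V, (G.induce ({v}ᶜ : Set V)).Connected → psdFort G ({v}ᶜ : Set V)) ∧
      2 ≤ sInf {n | ∃ S : Set V,
        (psdIrr G S ∧ ∀ T : Set V, S ⊂ T → ¬ psdIrr G T) ∧ S.ncard = n} := by
  refine ⟨fun v => psdFort_compl_singleton (hδ v), ?_⟩
  obtain ⟨S, hS⟩ := exists_maximal_psdIrr G
  refine le_csInf ⟨_, S, hS, rfl⟩ ?_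
  rintro n ⟨T, hT, rfl⟩
  exact two_le_ncard_of_maximal_psdIrr hconn hδ hT
end

section
/- If T is a tree, then V(T) is the only PSD fort of T; consequently zpir(T) = ZpIR(T) = 1. -/
namespace SimpleGraph

variable {V : Type*} {G : SimpleGraph V} {F : Set V} {u : F}

lemma compOf_subset : compOf G F u ⊆ F := fun _ hw => hw.1

lemma mem_compOf_self : (u : V) ∈ compOf G F u := ⟨u.2, Reachable.refl _⟩

lemma exists_isPath_support_subset_of_mem_compOf {a b : V}
    (ha : a ∈ compOf G F u) (hb : b ∈ compOf G F u) :
    ∃ p : G.Walk a b, p.IsPath ∧ ∀ x ∈ p.support, x ∈ F := by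
  classical
  obtain ⟨haF, hau⟩ := ha
  obtain ⟨hbF, hbu⟩ := hb
  obtain ⟨q⟩ := hau.trans hbu.symm
  let p : G.Walk a b := q.map (Embedding.induce F).toHom
  refine ⟨p.toPath, p.toPath.2, fun x hx => ?_⟩
  obtain ⟨y, -, rfl⟩ := List.mem_map.mp
    ((Walk.support_map _ q) ▸ Walk.support_toPath_subset_support p hx)
  exact y.2

lemma notMem_of_adj_mem_compOf {a v : V} (ha : a ∈ compOf G F u) (hva : G.Adj v a)
    (hv : v ∉ compOf G F u) : v ∉ F := fun hvF =>
  hv ⟨hvF, (Adj.reachable (G := G.induce F) (u := ⟨v, hvF⟩) (v := ⟨a, ha.1⟩) hva).trans ha.2⟩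

lemma IsAcyclic.subsingleton_neighborSet_inter_compOf (hG : G.IsAcyclic) {v : V}
    (hv : v ∉ compOf G F u) : (G.neighborSet v ∩ compOf G F u).Subsingleton := by
  rintro a ⟨hva, ha⟩ b ⟨hvb, hb⟩
  by_contra hab
  have hvF := notMem_of_adj_mem_compOf ha hva hv
  obtain ⟨p, hp, hpF⟩ := exists_isPath_support_subset_of_mem_compOf ha hb
  let q : G.Walk a b := .cons hva.symm (.cons hvb .nil)
  have hq : q.IsPath := by
    rw [Walk.isPath_def]
    change [a, v, b].Nodup
    simp [hab, (G.ne_of_adj hva).symm, G.ne_of_adj hvb]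
  have hpq : p = q := congrArg Subtype.val ((hG.subsingleton_path a b).elim ⟨p, hp⟩ ⟨q, hq⟩)
  exact hvF (hpF v (hpq ▸ by simp [q]))

lemma IsAcyclic.adj_mem_compOf_of_stdFort (hG : G.IsAcyclic) (hC : stdFort G (compOf G F u))
    {w x : V} (hw : w ∈ compOf G F u) (hwx : G.Adj w x) : x ∈ compOf G F u := by
  by_contra hx
  refine hC.2 x hx (Set.ncard_eq_one.mpr ⟨w, ?_⟩)
  exact (hG.subsingleton_neighborSet_inter_compOf hx).eq_singleton_of_mem ⟨hwx.symm, hw⟩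

lemma Preconnected.eq_univ_of_adj_mem (hG : G.Preconnected) {S : Set V} (hne : S.Nonempty)
    (hS : ∀ ⦃w x⦄, w ∈ S → G.Adj w x → x ∈ S) : S = Set.univ := by
  obtain ⟨a, ha⟩ := hne
  refine Set.eq_univ_of_forall fun x => by_contra fun hx => ?_
  obtain ⟨p⟩ := hG a x
  obtain ⟨d, -, hd, hd'⟩ := p.exists_boundary_dart S ha hx
  exact hd' (hS hd d.adj)

theorem IsTree.eq_univ_of_psdFort (hG : G.IsTree) (hF : psdFort G F) : F = Set.univ := by
  obtain ⟨u, hu⟩ := hF.1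
  have hC : compOf G F ⟨u, hu⟩ = Set.univ :=
    hG.connected.preconnected.eq_univ_of_adj_mem ⟨u, mem_compOf_self⟩
      fun _ _ => hG.isAcyclic.adj_mem_compOf_of_stdFort (hF.2 _)
  exact Set.eq_univ_of_univ_subset (hC ▸ compOf_subset)

lemma Preconnected.compOf_univ (hG : G.Preconnected) (u : (Set.univ : Set V)) :
    compOf G Set.univ u = Set.univ :=
  Set.eq_univ_of_forall fun w =>
    ⟨Set.mem_univ w, (hG w u).map G.induceUnivIso.symm.toHom⟩

lemma Connected.psdFort_univ (hG : G.Connected) : psdFort G Set.univ := by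
  obtain ⟨v⟩ := hG.nonempty
  refine ⟨⟨v, Set.mem_univ v⟩, fun u => ?_⟩
  rw [hG.preconnected.compOf_univ u]
  exact ⟨⟨v, Set.mem_univ v⟩, fun w hw => absurd (Set.mem_univ w) hw⟩

lemma psdIrr_singleton (huniv : psdFort G Set.univ) (v : V) : psdIrr G {v} := by
  rintro w rfl
  exact ⟨Set.univ, huniv, Set.inter_univ _⟩

lemma eq_singleton_of_psdIrr (honly : ∀ F, psdFort G F → F = Set.univ) {S : Set V}
    (hS : psdIrr G S) {v : V} (hv : v ∈ S) : S = {v} := by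
  obtain ⟨F, hF, hSF⟩ := hS v hv
  rwa [honly F hF, Set.inter_univ] at hSF

lemma ncard_maximal_psdIrr_eq_singleton_one (huniv : psdFort G Set.univ)
    (honly : ∀ F, psdFort G F → F = Set.univ) :
    {n | ∃ S : Set V, (psdIrr G S ∧ ∀ S' : Set V, S ⊂ S' → ¬ psdIrr G S') ∧ S.ncard = n} =
      {1} := by
  obtain ⟨v, -⟩ := huniv.1
  refine Set.eq_singleton_iff_unique_mem.mpr ⟨⟨{v}, ⟨psdIrr_singleton huniv v, ?_⟩, ?_⟩, ?_⟩
  · intro S' hvS' hS'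
    exact hvS'.ne (eq_singleton_of_psdIrr honly hS' (hvS'.subset rfl)).symm
  · exact Set.ncard_singleton v
  · rintro n ⟨S, ⟨hS, hmax⟩, rfl⟩
    rcases S.eq_empty_or_nonempty with rfl | ⟨w, hw⟩
    · exact absurd (psdIrr_singleton huniv v) (hmax {v} (Set.singleton_nonempty v).empty_ssubset)
    rw [eq_singleton_of_psdIrr honly hS hw, Set.ncard_singleton]

end SimpleGraph

theorem stmt15_general {V : Type*} (T : SimpleGraph V) (hT : T.IsTree) :
    (∀ F : Set V, psdFort T F → F = Set.univ) ∧
      sInf {n | ∃ S : Set V,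
        (psdIrr T S ∧ ∀ S' : Set V, S ⊂ S' → ¬ psdIrr T S') ∧ S.ncard = n} = 1 ∧
      sSup {n | ∃ S : Set V,
        (psdIrr T S ∧ ∀ S' : Set V, S ⊂ S' → ¬ psdIrr T S') ∧ S.ncard = n} = 1 := by
  have honly : ∀ F : Set V, psdFort T F → F = Set.univ := fun _ => hT.eq_univ_of_psdFort
  rw [SimpleGraph.ncard_maximal_psdIrr_eq_singleton_one hT.connected.psdFort_univ honly]
  exact ⟨honly, csInf_singleton 1, csSup_singleton 1⟩

/-- If `T` is a tree, then `V(T)` is the only PSD fort of `T`; consequently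
`zpir(T) = ZpIR(T) = 1`. -/
theorem stmt15 {V : Type*} [Fintype V] (T : SimpleGraph V) (hT : T.IsTree) :
    (∀ F : Set V, psdFort T F → F = Set.univ) ∧
      sInf {n | ∃ S : Set V,
        (psdIrr T S ∧ ∀ S' : Set V, S ⊂ S' → ¬ psdIrr T S') ∧ S.ncard = n} = 1 ∧
      sSup {n | ∃ S : Set V,
        (psdIrr T S ∧ ∀ S' : Set V, S ⊂ S' → ¬ psdIrr T S') ∧ S.ncard = n} = 1 :=
  stmt15_general T hT
end

section
/- For a connected graph G of order n ≥ 2, if S is a skew-forcing irredundant set then |S| ≤ n − 2; hence ZsIR(G) ≤ n − 2 for every graph of order n ≥ 2 containing an edge (summing over components). -/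
/-- A skew fort: a nonempty set `F` such that no vertex of `G` (inside or outside `F`)
has exactly one neighbor in `F`. -/
def skewFort {V : Type*} (G : SimpleGraph V) (F : Set V) : Prop :=
  F.Nonempty ∧ ∀ v : V, (G.neighborSet v ∩ F).ncard ≠ 1

/-- `S` is skew-irredundant if every element of `S` has a private skew fort. -/
def skewIrr {V : Type*} (G : SimpleGraph V) (S : Set V) : Prop :=
  ∀ u ∈ S, ∃ F : Set V, skewFort G F ∧ S ∩ F = {u}

private lemma sub_claim {V : Type*} (G : SimpleGraph V) (S : Set V)
    (hS : skewIrr G S) (hss : Sᶜ.Subsingleton) :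
    ∀ a b : V, G.Adj a b → a ∈ S → False := by
  intro a b hab haS
  obtain ⟨F, ⟨hFne, hfort⟩, hpriv⟩ := hS a haS
  have haF : a ∈ F := by
    have : a ∈ S ∩ F := hpriv ▸ rfl
    exact this.2
  have hFsub : ∀ z ∈ F, z = a ∨ z ∈ Sᶜ := by
    intro z hz
    by_cases hzS : z ∈ S
    · left
      have : z ∈ S ∩ F := ⟨hzS, hz⟩
      rw [hpriv] at this; exact this
    · right; exact hzS
  by_cases hx : ∃ x ∈ F, x ≠ a
  · obtain ⟨x, hxF, hxa⟩ := hx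
    have hxS : x ∈ Sᶜ := by
      rcases hFsub x hxF with h | h
      · exact absurd h hxa
      · exact h
    have hFax : ∀ z ∈ F, z = a ∨ z = x := by
      intro z hz
      rcases hFsub z hz with h | h
      · exact Or.inl h
      · exact Or.inr (hss h hxS)
    -- a is not adjacent to x
    have hax : ¬ G.Adj a x := by
      intro h
      apply hfort a
      have : G.neighborSet a ∩ F = {x} := by
        ext z
        constructor
        · rintro ⟨hz1, hz2⟩
          rcases hFax z hz2 with rfl | rfl
          · exact absurd hz1 (G.irrefl)
          · rfl
        · rintro rfl
          exact ⟨h, hxF⟩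
      rw [this, Set.ncard_singleton]
    have hbx : b ≠ x := by
      rintro rfl; exact hax hab
    -- b must be adjacent to x
    have hbadjx : G.Adj b x := by
      by_contra h
      apply hfort b
      have : G.neighborSet b ∩ F = {a} := by
        ext z
        constructor
        · rintro ⟨hz1, hz2⟩
          rcases hFax z hz2 with rfl | rfl
          · rfl
          · exact absurd hz1 h
        · rintro rfl
          exact ⟨hab.symm, haF⟩
      rw [this, Set.ncard_singleton]
    have hbS : b ∈ S := by
      by_contra h
      exact hbx (hss h hxS)
    obtain ⟨F', ⟨hF'ne, hfort'⟩, hpriv'⟩ := hS b hbS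
    have hbF' : b ∈ F' := by
      have : b ∈ S ∩ F' := hpriv' ▸ rfl
      exact this.2
    have hF'sub : ∀ z ∈ F', z = b ∨ z = x := by
      intro z hz
      by_cases hzS : z ∈ S
      · left
        have : z ∈ S ∩ F' := ⟨hzS, hz⟩
        rw [hpriv'] at this; exact this
      · right; exact hss hzS hxS
    by_cases hy : x ∈ F'
    · apply hfort' b
      have : G.neighborSet b ∩ F' = {x} := by
        ext z
        constructor
        · rintro ⟨hz1, hz2⟩
          rcases hF'sub z hz2 with rfl | rfl
          · exact absurd hz1 (G.irrefl)
          · rfl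
        · rintro rfl
          exact ⟨hbadjx, hy⟩
      rw [this, Set.ncard_singleton]
    · apply hfort' a
      have : G.neighborSet a ∩ F' = {b} := by
        ext z
        constructor
        · rintro ⟨hz1, hz2⟩
          rcases hF'sub z hz2 with rfl | rfl
          · rfl
          · exact absurd hz2 hy
        · rintro rfl
          exact ⟨hab, hbF'⟩
      rw [this, Set.ncard_singleton]
  · push_neg at hx
    apply hfort b
    have : G.neighborSet b ∩ F = {a} := by
      ext z
      constructor
      · rintro ⟨hz1, hz2⟩
        exact hx z hz2
      · rintro rfl
        exact ⟨hab.symm, haF⟩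
    rw [this, Set.ncard_singleton]

private lemma key {V : Type*} [Fintype V] (G : SimpleGraph V)
    (he : ∃ u w : V, G.Adj u w) (S : Set V) (hS : skewIrr G S) :
    S.ncard ≤ Fintype.card V - 2 := by
  obtain ⟨u, w, huw⟩ := he
  have hnt : Sᶜ.Nontrivial := by
    rw [← Set.not_subsingleton_iff]
    intro hss
    by_cases huS : u ∈ S
    · exact sub_claim G S hS hss u w huw huS
    · by_cases hwS : w ∈ S
      · exact sub_claim G S hS hss w u huw.symm hwS
      · exact G.ne_of_adj huw (hss huS hwS)
  obtain ⟨x, hx, y, hy, hxy⟩ := hnt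
  have hsub : ({x, y} : Set V) ⊆ Sᶜ := by
    rintro z (rfl | rfl) <;> assumption
  have h2le : 2 ≤ Sᶜ.ncard := by
    calc 2 = ({x, y} : Set V).ncard := (Set.ncard_pair hxy).symm
    _ ≤ Sᶜ.ncard := Set.ncard_le_ncard hsub (Set.toFinite _)
  have hsum : S.ncard + Sᶜ.ncard = Fintype.card V := by
    rw [← Nat.card_eq_fintype_card]
    exact Set.ncard_add_ncard_compl S
  omega

/-- For a connected graph of order `n ≥ 2`, every skew-irredundant set has size at most
`n − 2`; hence `ZsIR(G) ≤ n − 2` for every graph of order `n ≥ 2` containing an edge. -/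
theorem stmt16 {V : Type*} [Fintype V] (G : SimpleGraph V)
    (h2 : 2 ≤ Fintype.card V) (he : ∃ u w : V, G.Adj u w) :
    (G.Connected → ∀ S : Set V, skewIrr G S → S.ncard ≤ Fintype.card V - 2) ∧
      sSup {n | ∃ S : Set V, skewIrr G S ∧ S.ncard = n} ≤ Fintype.card V - 2 := by
  constructor
  · intro _ S hS
    exact key G he S hS
  · apply csSup_le'
    rintro n ⟨S, hS, rfl⟩
    exact key G he S hS
end

section
/- Let G be a connected graph of order n ≥ 2 whose vertex set partitions as V(G) = A ⊔ B ⊔ C where A and B are nonempty independent sets and G = G[A] ∨ G[B] ∨ G[C] (every vertex of A is adjacent to every vertex of B ∪ C and every vertex of B is adjacent to every vertex of A ∪ C). Then for any x ∈ A and y ∈ B, the set V(G) \ {x, y} is a minimal skew forcing set; hence the maximum size of a minimal skew forcing set is n − 2. -/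
/-- A set `B` is skew-closed if no skew force is applicable: whenever `w` is the unique
neighbor of some vertex `u` outside `B`, in fact `w ∈ B`. -/
def skewClosed {V : Type*} (G : SimpleGraph V) (B : Set V) : Prop :=
  ∀ u w : V, G.Adj u w → (∀ w' : V, G.Adj u w' → w' ∉ B → w' = w) → w ∈ B

/-- `S` is a skew forcing set if the skew forcing process started at `S` colors all
vertices, i.e. every skew-closed superset of `S` is `V(G)`. -/
def skewForcingSet {V : Type*} (G : SimpleGraph V) (S : Set V) : Prop :=
  ∀ B : Set V, S ⊆ B → skewClosed G B → B = Set.univ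

/-- If `v` and `w` are adjacent, the complement of `{v, w}` is a skew forcing set. -/
lemma force_compl_pair {V : Type*} (G : SimpleGraph V) {v w : V} (h : G.Adj v w) :
    skewForcingSet G ({v, w}ᶜ : Set V) := by
  intro D hSD hcl
  have hw : w ∈ D := by
    refine hcl v w h ?_
    intro w' hadj hnD
    have hm : w' ∈ ({v, w} : Set V) := by
      by_contra hc; exact hnD (hSD hc)
    rcases hm with h1 | h1
    · exact absurd (h1 ▸ hadj) G.irrefl
    · exact h1
  have hv : v ∈ D := by
    refine hcl w v h.symm ?_
    intro w' hadj hnD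
    have hm : w' ∈ ({v, w} : Set V) := by
      by_contra hc; exact hnD (hSD hc)
    rcases hm with h1 | h1
    · exact h1
    · exact absurd (h1 ▸ hadj) G.irrefl
  apply Set.eq_univ_of_forall
  intro z
  by_cases hz : z ∈ ({v, w} : Set V)
  · rcases hz with h1 | h1 <;> subst h1 <;> assumption
  · exact hSD hz

/-- If `V(G) = A ⊔ B ⊔ C` with `A`, `B` nonempty independent sets and
`G = G[A] ∨ G[B] ∨ G[C]`, then for any `x ∈ A`, `y ∈ B`, the set `V(G) \ {x,y}` is a
minimal skew forcing set; hence the maximum size of a minimal skew forcing set is `n − 2`. -/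
theorem stmt17 {V : Type*} [Fintype V] (G : SimpleGraph V) (hconn : G.Connected)
    (h2 : 2 ≤ Fintype.card V)
    (A B C : Set V)
    (hdAB : Disjoint A B) (hdAC : Disjoint A C) (hdBC : Disjoint B C)
    (hcover : A ∪ B ∪ C = Set.univ)
    (hA : A.Nonempty) (hB : B.Nonempty)
    (hAind : ∀ u ∈ A, ∀ w ∈ A, ¬ G.Adj u w)
    (hBind : ∀ u ∈ B, ∀ w ∈ B, ¬ G.Adj u w)
    (hAB : ∀ a ∈ A, ∀ b ∈ B, G.Adj a b)
    (hAC : ∀ a ∈ A, ∀ c ∈ C, G.Adj a c)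
    (hBC : ∀ b ∈ B, ∀ c ∈ C, G.Adj b c) :
    (∀ x ∈ A, ∀ y ∈ B, skewForcingSet G ({x, y}ᶜ : Set V) ∧
        ∀ S' : Set V, S' ⊂ ({x, y}ᶜ : Set V) → ¬ skewForcingSet G S') ∧
      sSup {n | ∃ S : Set V,
          (skewForcingSet G S ∧ ∀ S' : Set V, S' ⊂ S → ¬ skewForcingSet G S') ∧
          S.ncard = n} = Fintype.card V - 2 := by
  -- vertices in different parts are distinct
  have hloc : ∀ v : V, v ∈ A ∨ v ∈ B ∨ v ∈ C := by
    intro v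
    have : v ∈ A ∪ B ∪ C := hcover ▸ Set.mem_univ v
    rcases this with (h | h) | h
    · exact Or.inl h
    · exact Or.inr (Or.inl h)
    · exact Or.inr (Or.inr h)
  have key : ∀ x ∈ A, ∀ y ∈ B, skewForcingSet G ({x, y}ᶜ : Set V) ∧
      ∀ S' : Set V, S' ⊂ ({x, y}ᶜ : Set V) → ¬ skewForcingSet G S' := by
    intro x hx y hy
    constructor
    · exact force_compl_pair G (hAB x hx y hy)
    · intro S' hS' hforce
      have hsub := hS'.subset
      obtain ⟨z, hz1, hz2⟩ := Set.exists_of_ssubset hS'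
      have hzx : z ≠ x := fun h => hz1 (by simp [h])
      have hzy : z ≠ y := fun h => hz1 (by simp [h])
      -- find a skew-closed proper superset of S'
      rcases hloc z with hzA | hzB | hzC
      · -- white set {x, z}
        have hclosed : skewClosed G ({x, z}ᶜ : Set V) := by
          intro u w hadj huniq
          by_contra hw
          have hwW : w ∈ ({x, z} : Set V) := not_not.mp (fun h => hw h)
          have hwA : w ∈ A := by rcases hwW with h | h <;> (subst h; assumption)
          have huA : u ∉ A := fun huA => hAind u huA w hwA hadj
          have hux : G.Adj u x ∧ G.Adj u z := by
            rcases hloc u with h | h | h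
            · exact absurd h huA
            · exact ⟨(hAB x hx u h).symm, (hAB z hzA u h).symm⟩
            · exact ⟨(hAC x hx u h).symm, (hAC z hzA u h).symm⟩
          have e1 : x = w := huniq x hux.1 (by simp)
          have e2 : z = w := huniq z hux.2 (by simp)
          exact hzx (e2.trans e1.symm)
        have : ({x, z}ᶜ : Set V) = Set.univ := by
          refine hforce _ ?_ hclosed
          intro s hs
          simp only [Set.mem_compl_iff, Set.mem_insert_iff, Set.mem_singleton_iff]
          push_neg
          exact ⟨fun h => (hsub hs) (by simp [h]), fun h => hz2 (h ▸ hs)⟩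
        have : x ∈ ({x, z}ᶜ : Set V) := this ▸ Set.mem_univ x
        exact this (by simp)
      · -- white set {y, z}
        have hclosed : skewClosed G ({y, z}ᶜ : Set V) := by
          intro u w hadj huniq
          by_contra hw
          have hwW : w ∈ ({y, z} : Set V) := not_not.mp (fun h => hw h)
          have hwB : w ∈ B := by rcases hwW with h | h <;> (subst h; assumption)
          have huB : u ∉ B := fun huB => hBind u huB w hwB hadj
          have hux : G.Adj u y ∧ G.Adj u z := by
            rcases hloc u with h | h | h
            · exact ⟨hAB u h y hy, hAB u h z hzB⟩
            · exact absurd h huB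
            · exact ⟨(hBC y hy u h).symm, (hBC z hzB u h).symm⟩
          have e1 : y = w := huniq y hux.1 (by simp)
          have e2 : z = w := huniq z hux.2 (by simp)
          exact hzy (e2.trans e1.symm)
        have : ({y, z}ᶜ : Set V) = Set.univ := by
          refine hforce _ ?_ hclosed
          intro s hs
          simp only [Set.mem_compl_iff, Set.mem_insert_iff, Set.mem_singleton_iff]
          push_neg
          exact ⟨fun h => (hsub hs) (by simp [h]), fun h => hz2 (h ▸ hs)⟩
        have : y ∈ ({y, z}ᶜ : Set V) := this ▸ Set.mem_univ y
        exact this (by simp)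
      · -- white set {x, y, z}, z ∈ C
        have hxy : x ≠ y := fun h => hdAB.ne_of_mem hx hy h
        have hclosed : skewClosed G ({x, y, z}ᶜ : Set V) := by
          intro u w hadj huniq
          by_contra hw
          -- u has two distinct white neighbors
          have htwo : ∃ p q : V, p ≠ q ∧ G.Adj u p ∧ G.Adj u q ∧
              p ∈ ({x, y, z} : Set V) ∧ q ∈ ({x, y, z} : Set V) := by
            rcases hloc u with h | h | h
            · exact ⟨y, z, fun e => hdBC.ne_of_mem hy hzC e,
                hAB u h y hy, hAC u h z hzC, by simp, by simp⟩
            · exact ⟨x, z, fun e => hdAC.ne_of_mem hx hzC e,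
                (hAB x hx u h).symm, hBC u h z hzC, by simp, by simp⟩
            · exact ⟨x, y, hxy, (hAC x hx u h).symm, (hBC y hy u h).symm,
                by simp, by simp⟩
          obtain ⟨p, q, hpq, hup, huq, hpW, hqW⟩ := htwo
          have e1 : p = w := huniq p hup (fun h => h hpW)
          have e2 : q = w := huniq q huq (fun h => h hqW)
          exact hpq (e1.trans e2.symm)
        have : ({x, y, z}ᶜ : Set V) = Set.univ := by
          refine hforce _ ?_ hclosed
          intro s hs
          simp only [Set.mem_compl_iff, Set.mem_insert_iff, Set.mem_singleton_iff]
          push_neg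
          refine ⟨fun h => (hsub hs) (by simp [h]), fun h => (hsub hs) (by simp [h]),
            fun h => hz2 (h ▸ hs)⟩
        have : x ∈ ({x, y, z}ᶜ : Set V) := this ▸ Set.mem_univ x
        exact this (by simp)
  refine ⟨key, ?_⟩
  obtain ⟨x, hx⟩ := hA
  obtain ⟨y, hy⟩ := hB
  have hxy : x ≠ y := fun h => hdAB.ne_of_mem hx hy h
  have hmem : Fintype.card V - 2 ∈ {n | ∃ S : Set V,
      (skewForcingSet G S ∧ ∀ S' : Set V, S' ⊂ S → ¬ skewForcingSet G S') ∧
      S.ncard = n} := by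
    refine ⟨({x, y}ᶜ : Set V), ⟨(key x hx y hy).1, (key x hx y hy).2⟩, ?_⟩
    have hsum := Set.ncard_add_ncard_compl ({x, y} : Set V)
    rw [Set.ncard_pair hxy, Nat.card_eq_fintype_card] at hsum
    omega
  have hub : ∀ n ∈ {n | ∃ S : Set V,
      (skewForcingSet G S ∧ ∀ S' : Set V, S' ⊂ S → ¬ skewForcingSet G S') ∧
      S.ncard = n}, n ≤ Fintype.card V - 2 := by
    rintro n ⟨S, ⟨hSf, hSmin⟩, rfl⟩
    have hsum := Set.ncard_add_ncard_compl S
    rw [Nat.card_eq_fintype_card] at hsum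
    by_contra hlt
    push_neg at hlt
    have hsc : Sᶜ.ncard ≤ 1 := by omega
    have hss : ∀ a ∈ Sᶜ, ∀ b ∈ Sᶜ, a = b := fun a ha b hb =>
      (Set.ncard_le_one_iff (Set.toFinite _)).mp hsc ha hb
    obtain ⟨v, hv⟩ : ∃ v : V, Sᶜ ⊆ {v} := by
      rcases Set.eq_empty_or_nonempty Sᶜ with he | ⟨v, hv⟩
      · exact ⟨x, by rw [he]; exact Set.empty_subset _⟩
      · exact ⟨v, fun u hu => hss u hu v hv⟩
    -- find a neighbor of v
    obtain ⟨w, hw⟩ : ∃ w : V, G.Adj v w := by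
      rcases hloc v with h | h | h
      · exact ⟨y, hAB v h y hy⟩
      · exact ⟨x, (hAB x hx v h).symm⟩
      · exact ⟨x, (hAC x hx v h).symm⟩
    have hPS : ({v, w}ᶜ : Set V) ⊆ S := by
      intro p hp
      simp only [Set.mem_compl_iff, Set.mem_insert_iff, Set.mem_singleton_iff] at hp
      push_neg at hp
      by_contra hpS
      exact hp.1 (hv hpS)
    have hwS : w ∈ S := by
      by_contra hwS
      exact hw.ne (hv hwS).symm
    have hne : ({v, w}ᶜ : Set V) ≠ S := by
      intro h
      have : w ∈ ({v, w}ᶜ : Set V) := h ▸ hwS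
      exact this (by simp)
    exact hSmin _ ⟨hPS, fun h => hne (le_antisymm hPS h)⟩ (force_compl_pair G hw)
  exact IsGreatest.csSup_eq ⟨hmem, hub⟩
end

section
/- If G is a connected graph of order n ≥ 2 with a maximal skew-irredundant set S of size n − 2, with V(G) \ S = {x, y}, then x and y are adjacent; moreover V(G) partitions as A ⊔ B ⊔ C where A consists of x and all its independent twins, B consists of y and all its independent twins, A and B are independent sets, and G = G[A] ∨ G[B] ∨ G[C]. -/
/-- If a connected graph of order `n ≥ 2` has a maximal skew-irredundant set of size
`n − 2` with complement `{x, y}`, then `x` and `y` are adjacent and `V(G)` partitions as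
`A ⊔ B ⊔ C` where `A` is `x` with its independent twins, `B` is `y` with its independent
twins, `A` and `B` are independent, and `G = G[A] ∨ G[B] ∨ G[C]`. -/
theorem stmt18 {V : Type*} [Fintype V] (G : SimpleGraph V) (hconn : G.Connected)
    (h2 : 2 ≤ Fintype.card V)
    (S : Set V) (hirr : skewIrr G S)
    (hmax : ∀ T : Set V, S ⊂ T → ¬ skewIrr G T)
    (hcard : S.ncard = Fintype.card V - 2)
    (x y : V) (hxy : x ≠ y) (hcomp : Sᶜ = ({x, y} : Set V)) :
    G.Adj x y ∧
      (let A : Set V := {u | G.neighborSet u = G.neighborSet x}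
       let B : Set V := {u | G.neighborSet u = G.neighborSet y}
       let C : Set V := (A ∪ B)ᶜ
       Disjoint A B ∧
         (∀ u ∈ A, ∀ w ∈ A, ¬ G.Adj u w) ∧
         (∀ u ∈ B, ∀ w ∈ B, ¬ G.Adj u w) ∧
         (∀ a ∈ A, ∀ b ∈ B, G.Adj a b) ∧
         (∀ a ∈ A, ∀ c ∈ C, G.Adj a c) ∧
         (∀ b ∈ B, ∀ c ∈ C, G.Adj b c)) := by
  classical
  have hxS : x ∉ S := by
    have : x ∈ Sᶜ := by rw [hcomp]; exact Set.mem_insert _ _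
    exact this
  have hyS : y ∉ S := by
    have : y ∈ Sᶜ := by rw [hcomp]; exact Set.mem_insert_of_mem _ rfl
    exact this
  -- every vertex has a neighbor
  have nbr : ∀ v : V, ∃ w, G.Adj v w := by
    intro v
    obtain ⟨w, hw⟩ := Fintype.exists_ne_of_one_lt_card (by omega) v
    obtain ⟨p⟩ := hconn.preconnected v w
    cases p with
    | nil => exact absurd rfl hw
    | cons h q => exact ⟨_, h⟩
  -- a skew fort with two elements forces equal neighborhoods
  have pairN : ∀ a b : V, (∀ v : V, (G.neighborSet v ∩ {a, b}).ncard ≠ 1) →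
      G.neighborSet a = G.neighborSet b := by
    intro a b h
    have key : ∀ w : V, G.Adj w a → G.Adj w b := by
      intro w haw
      by_contra hbw
      apply h w
      have : G.neighborSet w ∩ {a, b} = {a} := by
        ext v
        simp only [Set.mem_inter_iff, SimpleGraph.mem_neighborSet, Set.mem_insert_iff,
          Set.mem_singleton_iff]
        constructor
        · rintro ⟨hv, rfl | rfl⟩
          · rfl
          · exact absurd hv hbw
        · rintro rfl; exact ⟨haw, Or.inl rfl⟩
      rw [this, Set.ncard_singleton]
    have key' : ∀ w : V, G.Adj w b → G.Adj w a := by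
      intro w hbw
      by_contra haw
      apply h w
      have : G.neighborSet w ∩ {a, b} = {b} := by
        ext v
        simp only [Set.mem_inter_iff, SimpleGraph.mem_neighborSet, Set.mem_insert_iff,
          Set.mem_singleton_iff]
        constructor
        · rintro ⟨hv, rfl | rfl⟩
          · exact absurd hv haw
          · rfl
        · rintro rfl; exact ⟨hbw, Or.inr rfl⟩
      rw [this, Set.ncard_singleton]
    ext w
    simp only [SimpleGraph.mem_neighborSet]
    constructor
    · intro h'; exact (key w h'.symm).symm
    · intro h'; exact (key' w h'.symm).symm
  -- the key trichotomy for elements of S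
  have key : ∀ u ∈ S, G.neighborSet u = G.neighborSet x ∨ G.neighborSet u = G.neighborSet y ∨
      (∀ v : V, (G.neighborSet v ∩ {u, x, y}).ncard ≠ 1) := by
    intro u hu
    obtain ⟨F, ⟨hFne, hFcnt⟩, hFS⟩ := hirr u hu
    have huF : u ∈ F := ((Set.ext_iff.mp hFS u).mpr rfl).2
    have hsub : F ⊆ {u, x, y} := by
      intro v hv
      by_cases hvS : v ∈ S
      · have : v ∈ ({u} : Set V) := hFS ▸ ⟨hvS, hv⟩
        exact Or.inl this
      · have : v ∈ ({x, y} : Set V) := hcomp ▸ hvS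
        exact Or.inr this
    by_cases hx : x ∈ F
    · by_cases hy : y ∈ F
      · -- F = {u, x, y}
        have hFe : F = {u, x, y} := Set.Subset.antisymm hsub
          (by
            rintro v (rfl | rfl | rfl)
            exacts [huF, hx, hy])
        exact Or.inr (Or.inr (fun v => hFe ▸ hFcnt v))
      · -- F = {u, x}
        have hFe : F = {u, x} := Set.Subset.antisymm
          (by
            intro v hv
            rcases hsub hv with rfl | rfl | rfl
            · exact Or.inl rfl
            · exact Or.inr rfl
            · exact absurd hv hy)
          (by rintro v (rfl | rfl); exacts [huF, hx])
        exact Or.inl (pairN u x (fun v => hFe ▸ hFcnt v))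
    · by_cases hy : y ∈ F
      · -- F = {u, y}
        have hFe : F = {u, y} := Set.Subset.antisymm
          (by
            intro v hv
            rcases hsub hv with rfl | rfl | rfl
            · exact Or.inl rfl
            · exact absurd hv hx
            · exact Or.inr rfl)
          (by rintro v (rfl | rfl); exacts [huF, hy])
        exact Or.inr (Or.inl (pairN u y (fun v => hFe ▸ hFcnt v)))
      · -- F = {u}: impossible since u has a neighbor
        exfalso
        have hFe : F = {u} := Set.Subset.antisymm
          (by
            intro v hv
            rcases hsub hv with rfl | rfl | rfl
            · rfl
            · exact absurd hv hx
            · exact absurd hv hy)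
          (by rintro v rfl; exact huF)
        obtain ⟨w, hw⟩ := nbr u
        apply hFcnt w
        rw [hFe]
        have : G.neighborSet w ∩ {u} = {u} := by
          ext v
          simp only [Set.mem_inter_iff, SimpleGraph.mem_neighborSet, Set.mem_singleton_iff]
          constructor
          · rintro ⟨_, rfl⟩; rfl
          · rintro rfl; exact ⟨hw.symm, rfl⟩
        rw [this, Set.ncard_singleton]
  -- x and y are adjacent
  have hadj : G.Adj x y := by
    by_contra hnxy
    obtain ⟨u, hu⟩ := nbr x
    have hux : u ≠ x := fun h => G.irrefl (h ▸ hu)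
    have huy : u ≠ y := fun h => hnxy (h ▸ hu)
    have huS : u ∈ S := by
      by_contra h
      have : u ∈ ({x, y} : Set V) := hcomp ▸ h
      rcases this with rfl | rfl
      · exact hux rfl
      · exact huy rfl
    rcases key u huS with hA | hB | hF
    · have : x ∈ G.neighborSet x := by
        rw [← hA]; exact hu.symm
      exact G.irrefl this
    · have : x ∈ G.neighborSet y := by
        rw [← hB]; exact hu.symm
      exact hnxy this.symm
    · apply hF x
      have : G.neighborSet x ∩ {u, x, y} = {u} := by
        ext v
        simp only [Set.mem_inter_iff, SimpleGraph.mem_neighborSet, Set.mem_insert_iff,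
          Set.mem_singleton_iff]
        constructor
        · rintro ⟨hv, rfl | rfl | rfl⟩
          · rfl
          · exact absurd hv (G.irrefl)
          · exact absurd hv hnxy
        · rintro rfl; exact ⟨hu, Or.inl rfl⟩
      rw [this, Set.ncard_singleton]
  -- non-twins of x and y in S are adjacent to both
  have hC : ∀ c ∈ S, G.neighborSet c ≠ G.neighborSet x → G.neighborSet c ≠ G.neighborSet y →
      G.Adj x c ∧ G.Adj y c := by
    intro c hc hcA hcB
    rcases key c hc with h | h | hF
    · exact absurd h hcA
    · exact absurd h hcB
    have hcx : c ≠ x := fun h => hcA (by rw [h])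
    have hcy : c ≠ y := fun h => hcB (by rw [h])
    constructor
    · by_contra hxc
      apply hF x
      have : G.neighborSet x ∩ {c, x, y} = {y} := by
        ext v
        simp only [Set.mem_inter_iff, SimpleGraph.mem_neighborSet, Set.mem_insert_iff,
          Set.mem_singleton_iff]
        constructor
        · rintro ⟨hv, rfl | rfl | rfl⟩
          · exact absurd hv hxc
          · exact absurd hv (G.irrefl)
          · rfl
        · rintro rfl; exact ⟨hadj, Or.inr (Or.inr rfl)⟩
      rw [this, Set.ncard_singleton]
    · by_contra hyc
      apply hF y
      have : G.neighborSet y ∩ {c, x, y} = {x} := by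
        ext v
        simp only [Set.mem_inter_iff, SimpleGraph.mem_neighborSet, Set.mem_insert_iff,
          Set.mem_singleton_iff]
        constructor
        · rintro ⟨hv, rfl | rfl | rfl⟩
          · exact absurd hv hyc
          · rfl
          · exact absurd hv (G.irrefl)
        · rintro rfl; exact ⟨hadj.symm, Or.inr (Or.inl rfl)⟩
      rw [this, Set.ncard_singleton]
  refine ⟨hadj, ?_, ?_, ?_, ?_, ?_, ?_⟩
  · -- Disjoint A B
    rw [Set.disjoint_left]
    intro u (huA : G.neighborSet u = G.neighborSet x) (huB : G.neighborSet u = G.neighborSet y)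
    have hxyN : G.neighborSet x = G.neighborSet y := huA ▸ huB
    have : y ∈ G.neighborSet y := by rw [← hxyN]; exact hadj
    exact G.irrefl this
  · -- A independent
    intro u (hu : G.neighborSet u = G.neighborSet x) w (hw : G.neighborSet w = G.neighborSet x)
      hadj'
    have : u ∈ G.neighborSet u := by rw [hu, ← hw]; exact hadj'.symm
    exact G.irrefl this
  · -- B independent
    intro u (hu : G.neighborSet u = G.neighborSet y) w (hw : G.neighborSet w = G.neighborSet y)
      hadj'
    have : u ∈ G.neighborSet u := by rw [hu, ← hw]; exact hadj'.symm
    exact G.irrefl this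
  · -- A–B complete
    intro a (ha : G.neighborSet a = G.neighborSet x) b (hb : G.neighborSet b = G.neighborSet y)
    have : b ∈ G.neighborSet a := by
      rw [ha]
      have : x ∈ G.neighborSet b := by rw [hb]; exact hadj.symm
      exact this.symm
    exact this
  · -- A–C complete
    intro a (ha : G.neighborSet a = G.neighborSet x) c hc
    simp only [Set.mem_compl_iff, Set.mem_union, Set.mem_setOf_eq, not_or] at hc
    obtain ⟨hcA, hcB⟩ := hc
    have hcS : c ∈ S := by
      by_contra h
      have : c ∈ ({x, y} : Set V) := hcomp ▸ h
      rcases this with rfl | rfl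
      · exact hcA rfl
      · exact hcB rfl
    have : c ∈ G.neighborSet a := by rw [ha]; exact (hC c hcS hcA hcB).1
    exact this
  · -- B–C complete
    intro b (hb : G.neighborSet b = G.neighborSet y) c hc
    simp only [Set.mem_compl_iff, Set.mem_union, Set.mem_setOf_eq, not_or] at hc
    obtain ⟨hcA, hcB⟩ := hc
    have hcS : c ∈ S := by
      by_contra h
      have : c ∈ ({x, y} : Set V) := hcomp ▸ h
      rcases this with rfl | rfl
      · exact hcA rfl
      · exact hcB rfl
    have : c ∈ G.neighborSet b := by rw [hb]; exact (hC c hcS hcA hcB).2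
    exact this
end

section
/- For a graph G of order n ≥ 3 with no isolated vertices: if D is a total 2-dominating set (every vertex of G has at least two neighbors in D), then for every v ∈ V(G) \ D, the set D ∪ {v} is a skew fort, and V(G) \ D is a skew-irredundant set; hence ZsIR(G) ≥ n − γ₂ᵗ(G). -/
/-- If `D` is a total 2-dominating set then `D ∪ {v}` is a skew fort for each `v ∉ D`
and `V(G) \ D` is skew-irredundant; hence `ZsIR(G) ≥ n − γ₂ᵗ(G)`. -/
theorem stmt19 {V : Type*} [Fintype V] (G : SimpleGraph V)
    (h3 : 3 ≤ Fintype.card V) (hni : ∀ v : V, ∃ w, G.Adj v w)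
    (hex : ∃ D : Set V, ∀ v : V, 2 ≤ (G.neighborSet v ∩ D).ncard) :
    (∀ D : Set V, (∀ v : V, 2 ≤ (G.neighborSet v ∩ D).ncard) →
        (∀ v ∉ D, skewFort G (insert v D)) ∧ skewIrr G Dᶜ) ∧
      Fintype.card V -
          sInf {n | ∃ D : Set V, (∀ v : V, 2 ≤ (G.neighborSet v ∩ D).ncard) ∧ D.ncard = n} ≤
        sSup {n | ∃ S : Set V, skewIrr G S ∧ S.ncard = n} := by
  have key : ∀ D : Set V, (∀ v : V, 2 ≤ (G.neighborSet v ∩ D).ncard) →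
      ∀ v : V, skewFort G (insert v D) := by
    intro D hD v
    refine ⟨⟨v, Set.mem_insert _ _⟩, fun w => ?_⟩
    have : 2 ≤ (G.neighborSet w ∩ insert v D).ncard :=
      le_trans (hD w) (Set.ncard_le_ncard
        (Set.inter_subset_inter_right _ (Set.subset_insert _ _)) (Set.toFinite _))
    omega
  have priv : ∀ (D : Set V), ∀ u ∈ Dᶜ, Dᶜ ∩ insert u D = {u} := by
    intro D u hu
    ext x
    simp only [Set.mem_inter_iff, Set.mem_compl_iff, Set.mem_insert_iff,
      Set.mem_singleton_iff]
    constructor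
    · rintro ⟨hx, rfl | hxD⟩
      · rfl
      · exact absurd hxD hx
    · rintro rfl; exact ⟨hu, Or.inl rfl⟩
  constructor
  · intro D hD
    exact ⟨fun v _ => key D hD v, fun u hu => ⟨insert u D, key D hD u, priv D u hu⟩⟩
  · set A := {n | ∃ D : Set V, (∀ v : V, 2 ≤ (G.neighborSet v ∩ D).ncard) ∧ D.ncard = n}
      with hAdef
    have hA : A.Nonempty := by obtain ⟨D, hD⟩ := hex; exact ⟨D.ncard, D, hD, rfl⟩
    obtain ⟨D, hD, hcard⟩ := Nat.sInf_mem hA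
    have hsI : skewIrr G Dᶜ := fun u hu => ⟨insert u D, key D hD u, priv D u hu⟩
    have hmem : Dᶜ.ncard ∈ {n | ∃ S : Set V, skewIrr G S ∧ S.ncard = n} := ⟨Dᶜ, hsI, rfl⟩
    have hbdd : BddAbove {n | ∃ S : Set V, skewIrr G S ∧ S.ncard = n} := by
      refine ⟨Fintype.card V, ?_⟩
      rintro n ⟨S, _, rfl⟩
      have := Set.ncard_le_ncard (Set.subset_univ S) (Set.toFinite _)
      simpa [Set.ncard_univ, Nat.card_eq_fintype_card] using this
    have h1 : D.ncard + Dᶜ.ncard = Fintype.card V := by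
      have := Set.ncard_add_ncard_compl D
      rwa [Nat.card_eq_fintype_card] at this
    calc Fintype.card V - sInf A = Dᶜ.ncard := by omega
      _ ≤ _ := le_csSup hbdd hmem
end
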